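/- arXiv:2310.15922 — 9 statements merged into one kernel-verified Lean document; each statement's English description precedes it below -/
import Mathlib

section
/- Let A, B, C be n×n complex matrices satisfying the commutation relations [A, C] = −i·B and [B, C] = i·A. Then for every real number θ, exp(−iθC) · A · exp(iθC) = (cos θ) · A + (sin θ) · B. -/
/-!
`A + iB` and `A - iB` are eigenvectors of `ad C = [C, ·]` with eigenvalues `1` and `-1`.
If `[X, Y] = μ Y`, then `Y (sX + sμ) = (sX) Y`, so conjugating by `exp(sX)` multiplies `Y` by
`e^{-sμ}`. Writing `A` as the mean of the two eigenvectors and taking `s = iθ` turns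
`e^{∓iθ}` into the rotation by `θ`.
-/

open NormedSpace

theorem exp_neg_smul_mul_mul_exp_smul_of_commutator_eq_smul {𝕂 𝔸 : Type*} [RCLike 𝕂]
    [NormedRing 𝔸] [NormedAlgebra 𝕂 𝔸] [CompleteSpace 𝔸] {X Y : 𝔸} {μ : 𝕂}
    (h : X * Y - Y * X = μ • Y) (s : 𝕂) :
    exp ((-s) • X) * Y * exp (s • X) = exp (-(s * μ)) • Y := by
  let +nondep : NormedAlgebra ℚ 𝔸 := .restrictScalars ℚ 𝕂 𝔸
  have hsemiconj : SemiconjBy Y (s • X + algebraMap 𝕂 𝔸 (s * μ)) (s • X) := by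
    rw [sub_eq_iff_eq_add] at h
    simp only [SemiconjBy, mul_add, mul_smul_comm, smul_mul_assoc, h,
      Algebra.algebraMap_eq_smul_one, mul_one, ← smul_smul]
    rw [smul_add, add_comm]
  have hconj := hsemiconj.exp_neg_mul_mul_exp_eq_self
  rw [NormedSpace.exp_add_of_commute (Algebra.commutes _ _).symm, ← algebraMap_exp_comm,
    ← mul_assoc, ← Algebra.commutes, Algebra.algebraMap_eq_smul_one, smul_mul_assoc, one_mul,
    ← neg_smul] at hconj
  conv_rhs => rw [← hconj]
  rw [smul_smul, ← exp_add, neg_add_cancel, exp_zero, one_smul]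

open Complex (I) in
theorem exp_neg_smul_mul_mul_exp_smul_eq_cos_smul_add_sin_smul {𝔸 : Type*}
    [NormedRing 𝔸] [NormedAlgebra ℂ 𝔸] [CompleteSpace 𝔸] {A B C : 𝔸}
    (hAC : A * C - C * A = (-I) • B) (hBC : B * C - C * B = I • A) (z : ℂ) :
    exp ((-(I * z)) • C) * A * exp ((I * z) • C) = Complex.cos z • A + Complex.sin z • B := by
  have hplus : C * (A + I • B) - (A + I • B) * C = (1 : ℂ) • (A + I • B) := by
    calc C * (A + I • B) - (A + I • B) * C = -(A * C - C * A) - I • (B * C - C * B) := by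
          simp only [mul_add, add_mul, mul_smul_comm, smul_mul_assoc, smul_sub]; abel
      _ = (1 : ℂ) • (A + I • B) := by rw [hAC, hBC, smul_smul, Complex.I_mul_I]; module
  have hminus : C * (A - I • B) - (A - I • B) * C = (-1 : ℂ) • (A - I • B) := by
    calc C * (A - I • B) - (A - I • B) * C = -(A * C - C * A) + I • (B * C - C * B) := by
          simp only [mul_sub, sub_mul, mul_smul_comm, smul_mul_assoc, smul_sub]; abel
      _ = (-1 : ℂ) • (A - I • B) := by rw [hAC, hBC, smul_smul, Complex.I_mul_I]; module
  set s := I * z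
  have hexp : Complex.exp s = Complex.cos z + Complex.sin z * I := by
    rw [show s = z * I from mul_comm _ _, Complex.exp_mul_I]
  have hexp_neg : Complex.exp (-s) = Complex.cos z - Complex.sin z * I := by
    rw [show -s = -z * I by ring, Complex.exp_mul_I, Complex.cos_neg, Complex.sin_neg, neg_mul,
      sub_eq_add_neg]
  have hA : A = (2⁻¹ : ℂ) • ((A + I • B) + (A - I • B)) := by module
  calc exp ((-s) • C) * A * exp (s • C)
      = (2⁻¹ : ℂ) • (exp ((-s) • C) * (A + I • B) * exp (s • C)
          + exp ((-s) • C) * (A - I • B) * exp (s • C)) := by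
        conv_lhs => rw [hA]
        simp only [mul_add, add_mul, mul_smul_comm, smul_mul_assoc, smul_add]
    _ = (2⁻¹ : ℂ) • (exp (-s) • (A + I • B) + exp s • (A - I • B)) := by
        rw [exp_neg_smul_mul_mul_exp_smul_of_commutator_eq_smul hplus,
          exp_neg_smul_mul_mul_exp_smul_of_commutator_eq_smul hminus, mul_one, mul_neg_one,
          neg_neg]
    _ = Complex.cos z • A + Complex.sin z • B := by
        rw [← Complex.exp_eq_exp_ℂ, hexp, hexp_neg]
        match_scalars
        · ring
        · linear_combination (-Complex.sin z) * Complex.I_mul_I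

/-- If `A, B, C` are `n × n` complex matrices with `[A, C] = −i B` and
`[B, C] = i A`, then for every real `θ`,
`exp(−iθC) A exp(iθC) = (cos θ) A + (sin θ) B`. -/
theorem exp_conj_rotation
    {n : ℕ} (A B C : Matrix (Fin n) (Fin n) ℂ)
    (hAC : A * C - C * A = (-Complex.I) • B)
    (hBC : B * C - C * B = Complex.I • A)
    (θ : ℝ) :
    NormedSpace.exp ((-(Complex.I * θ)) • C) * A * NormedSpace.exp ((Complex.I * θ) • C)
      = (Real.cos θ : ℂ) • A + (Real.sin θ : ℂ) • B := by
  rw [Complex.ofReal_cos, Complex.ofReal_sin]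
  open scoped Matrix.Norms.Operator in
  exact exp_neg_smul_mul_mul_exp_smul_eq_cos_smul_add_sin_smul hAC hBC θ
end

section
/- Let R be a unital complex *-ring and let ψ : Fin N → R satisfy the canonical anticommutation relations (CAR). Fix an index i, write n_j := ψ_j* ψ_j, and define the particle-hole element u := (∏_{j ≠ i} (1 − 2 n_j)) · (ψ_i* + ψ_i), where the factors 1 − 2 n_j pairwise commute so that the product is independent of the order. Then: (i) u is self-adjoint, u* = u; (ii) u is a unitary involution, u² = 1 (hence u* u = u u* = 1); (iii) u* ψ_i u = ψ_i*; and (iv) u* ψ_j u = ψ_j for every j ≠ i. -/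
/-!
Each parity factor `1 - 2 n_j` is a self-adjoint involution that commutes with `ψ_k` and `ψ_k*`
for `k ≠ j` and anticommutes with `ψ_j` (because `ψ_j n_j + n_j ψ_j = ψ_j`). Hence the string
`P = ∏_{j ≠ i} (1 - 2 n_j)` is a self-adjoint involution commuting with `ψ_i` and anticommuting
with every other `ψ_j`. The Majorana element `γ = ψ_i* + ψ_i` is a self-adjoint involution with
`γ ψ_i γ = ψ_i*` that anticommutes with every `ψ_j`, `j ≠ i`. So `u = P γ` is a product of two
commuting self-adjoint involutions, conjugation by `u` acts on `ψ_i` as conjugation by `γ`, and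
each `ψ_j` with `j ≠ i` anticommutes with both factors, hence commutes with `u`.
-/
theorem IsSelfAdjoint.list_prod {M : Type*} [Monoid M] [StarMul M] {l : List M}
    (hl : l.Pairwise Commute) (h : ∀ a ∈ l, IsSelfAdjoint a) : IsSelfAdjoint l.prod := by
  induction l with
  | nil => exact IsSelfAdjoint.one M
  | cons a l ih =>
    rw [List.pairwise_cons] at hl
    rw [List.prod_cons, ← IsSelfAdjoint.commute_iff (h a (by simp))]
    · exact Commute.list_prod_right _ _ hl.1
    · exact ih hl.2 fun b hb => h b (by simp [hb])

theorem List.prod_mul_self_eq_one {M : Type*} [Monoid M] {l : List M}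
    (hl : l.Pairwise Commute) (h : ∀ a ∈ l, a * a = 1) : l.prod * l.prod = 1 := by
  induction l with
  | nil => simp
  | cons a l ih =>
    rw [List.pairwise_cons] at hl
    rw [List.prod_cons, (Commute.list_prod_right _ _ hl.1).symm.mul_mul_mul_comm,
      h a (by simp), ih hl.2 fun b hb => h b (by simp [hb]), one_mul]

theorem commute_mul_of_anticommute {R : Type*} [Ring R] {x a b : R}
    (ha : x * a = -(a * x)) (hb : x * b = -(b * x)) : Commute x (a * b) := by
  rw [commute_iff_eq, ← mul_assoc, ha, neg_mul, mul_assoc, hb, mul_neg, neg_neg, mul_assoc]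

structure IsCAR {ι R : Type*} [Ring R] [StarRing R] [DecidableEq ι] (ψ : ι → R) : Prop where
  anticomm : ∀ i j, ψ i * ψ j + ψ j * ψ i = 0
  anticomm_star : ∀ i j, ψ i * star (ψ j) + star (ψ j) * ψ i = if i = j then 1 else 0

namespace CAR

variable {ι R : Type*} [Ring R] [StarRing R]

def number (ψ : ι → R) (j : ι) : R := star (ψ j) * ψ j

/-- The parity `(-1)^{n_j}` of the `j`-th mode. -/
def parity (ψ : ι → R) (j : ι) : R := 1 - 2 * number ψ j

def majorana (ψ : ι → R) (i : ι) : R := star (ψ i) + ψ i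

variable {ψ : ι → R}

theorem isSelfAdjoint_number (j : ι) : IsSelfAdjoint (number ψ j) :=
  IsSelfAdjoint.star_mul_self _

theorem isSelfAdjoint_parity (j : ι) : IsSelfAdjoint (parity ψ j) :=
  (IsSelfAdjoint.one R).sub ((IsSelfAdjoint.commute_iff (IsSelfAdjoint.ofNat 2)
    (isSelfAdjoint_number j)).1 (Commute.ofNat_left 2 _))

theorem isSelfAdjoint_majorana (i : ι) : IsSelfAdjoint (majorana ψ i) := by
  rw [isSelfAdjoint_iff, majorana, star_add, star_star, add_comm]

end CAR

namespace IsCAR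

open CAR

variable {ι R : Type*} [Ring R] [StarRing R] [DecidableEq ι] {ψ : ι → R} (h : IsCAR ψ)
include h

theorem mul_anticomm (j k : ι) : ψ j * ψ k = -(ψ k * ψ j) :=
  eq_neg_of_add_eq_zero_left (h.anticomm j k)

theorem mul_star_of_ne {j k : ι} (hjk : j ≠ k) : ψ j * star (ψ k) = -(star (ψ k) * ψ j) :=
  eq_neg_of_add_eq_zero_left (by simpa [hjk] using h.anticomm_star j k)

theorem mul_star_self (j : ι) : ψ j * star (ψ j) = 1 - number ψ j :=
  eq_sub_of_add_eq ((h.anticomm_star j j).trans (if_pos rfl))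

theorem mul_self_eq_zero (h2 : IsUnit (2 : R)) (j : ι) : ψ j * ψ j = 0 :=
  h2.mul_right_eq_zero.1 (by rw [two_mul]; exact h.anticomm j j)

theorem star_mul_self_eq_zero (h2 : IsUnit (2 : R)) (j : ι) : star (ψ j) * star (ψ j) = 0 := by
  rw [← star_mul, h.mul_self_eq_zero h2, star_zero]

theorem commute_number_of_ne {j k : ι} (hjk : j ≠ k) : Commute (ψ j) (number ψ k) := by
  calc ψ j * (star (ψ k) * ψ k) = -(star (ψ k) * (ψ j * ψ k)) := by
        rw [← mul_assoc, h.mul_star_of_ne hjk, neg_mul, mul_assoc]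
    _ = star (ψ k) * ψ k * ψ j := by rw [h.mul_anticomm j k, mul_neg, neg_neg, mul_assoc]

theorem commute_parity_of_ne {j k : ι} (hjk : j ≠ k) : Commute (ψ j) (parity ψ k) :=
  (Commute.one_right _).sub_right
    ((Commute.ofNat_right _ 2).mul_right (h.commute_number_of_ne hjk))

theorem commute_parity (j k : ι) : Commute (parity ψ j) (parity ψ k) := by
  rcases eq_or_ne j k with rfl | hjk
  · exact Commute.refl _
  have hψ := h.commute_parity_of_ne hjk
  have hstar : Commute (star (ψ j)) (parity ψ k) :=
    (isSelfAdjoint_parity (ψ := ψ) k).star_eq ▸ hψ.star_star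
  exact (Commute.one_left _).sub_left ((Commute.ofNat_left 2 _).mul_left (hstar.mul_left hψ))

theorem mul_number_add_number_mul (j : ι) : ψ j * number ψ j + number ψ j * ψ j = ψ j := by
  calc ψ j * number ψ j + number ψ j * ψ j
      = (ψ j * star (ψ j) + star (ψ j) * ψ j) * ψ j := by simp only [number]; noncomm_ring
    _ = ψ j := by simp [h.anticomm_star j j]

theorem mul_parity_self (j : ι) : ψ j * parity ψ j = -(parity ψ j * ψ j) := by
  rw [← add_eq_zero_iff_eq_neg]
  calc ψ j * parity ψ j + parity ψ j * ψ j
      = 2 * ψ j - 2 * (ψ j * number ψ j + number ψ j * ψ j) := by simp only [parity]; noncomm_ring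
    _ = 0 := by rw [h.mul_number_add_number_mul, sub_self]

theorem parity_mul_self (j : ι) : parity ψ j * parity ψ j = 1 := by
  calc parity ψ j * parity ψ j
      = 1 - 4 * number ψ j + 4 * (star (ψ j) * (ψ j * star (ψ j)) * ψ j) := by
        simp only [parity, number]; noncomm_ring
    _ = 1 - 2 * (star (ψ j) * star (ψ j) * (ψ j * ψ j + ψ j * ψ j)) := by
        rw [h.mul_star_self]; simp only [number]; noncomm_ring
    _ = 1 := by rw [h.anticomm, mul_zero, mul_zero, sub_zero]

theorem mul_prod_parity (l : List ι) (j : ι) :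
    ψ j * (l.map (parity ψ)).prod = (-1) ^ l.count j * ((l.map (parity ψ)).prod * ψ j) := by
  induction l with
  | nil => simp
  | cons k l ih =>
    rw [List.map_cons, List.prod_cons, List.count_cons, pow_add, ← mul_assoc]
    rcases eq_or_ne k j with rfl | hkj
    · rw [h.mul_parity_self, neg_mul, mul_assoc, ih,
        ((Commute.neg_one_right _).pow_right _).left_comm]
      simp [mul_assoc]
    · rw [(h.commute_parity_of_ne hkj.symm).eq, mul_assoc, ih,
        ((Commute.neg_one_right _).pow_right _).left_comm]
      simp [hkj, mul_assoc]

theorem isSelfAdjoint_prod_parity (l : List ι) : IsSelfAdjoint (l.map (parity ψ)).prod :=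
  IsSelfAdjoint.list_prod (List.pairwise_map.2 (List.pairwise_of_forall h.commute_parity))
    (by simp [isSelfAdjoint_parity])

theorem prod_parity_mul_self (l : List ι) :
    (l.map (parity ψ)).prod * (l.map (parity ψ)).prod = 1 :=
  List.prod_mul_self_eq_one (List.pairwise_map.2 (List.pairwise_of_forall h.commute_parity))
    (by simp [h.parity_mul_self])

theorem majorana_mul_self (h2 : IsUnit (2 : R)) (i : ι) : majorana ψ i * majorana ψ i = 1 := by
  calc majorana ψ i * majorana ψ i
      = star (ψ i) * star (ψ i) + (ψ i * star (ψ i) + star (ψ i) * ψ i) + ψ i * ψ i := by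
        simp only [majorana]; noncomm_ring
    _ = 1 := by
        rw [h.star_mul_self_eq_zero h2, h.mul_self_eq_zero h2, h.anticomm_star, if_pos rfl,
          zero_add, add_zero]

theorem majorana_mul_mul_majorana_self (h2 : IsUnit (2 : R)) (i : ι) :
    majorana ψ i * ψ i * majorana ψ i = star (ψ i) := by
  calc majorana ψ i * ψ i * majorana ψ i
      = star (ψ i) * (ψ i * star (ψ i) + star (ψ i) * ψ i) - star (ψ i) * star (ψ i) * ψ i
          + majorana ψ i * (ψ i * ψ i) + ψ i * ψ i * star (ψ i) := by
        simp only [majorana]; noncomm_ring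
    _ = star (ψ i) := by
        rw [h.anticomm_star, if_pos rfl, h.star_mul_self_eq_zero h2, h.mul_self_eq_zero h2]
        simp

theorem mul_majorana_of_ne {i j : ι} (hji : j ≠ i) :
    ψ j * majorana ψ i = -(majorana ψ i * ψ j) := by
  rw [majorana, mul_add, add_mul, h.mul_star_of_ne hji, h.mul_anticomm j i, neg_add]

end IsCAR

theorem List.count_filter_ne_finRange {N : ℕ} (i j : Fin N) :
    ((List.finRange N).filter (fun k => k ≠ i)).count j = if j = i then 0 else 1 := by
  split_ifs with hj
  · exact List.count_eq_zero.2 (by simp [hj])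
  · exact List.count_eq_one_of_mem ((List.nodup_finRange N).filter _) (by simp [hj])

open CAR in
/-- Let `ψ : Fin N → R` be a CAR family in a unital complex *-ring,
fix `i`, put `n_j := ψ_j* ψ_j` and define the particle-hole element
`u := (∏_{j ≠ i} (1 − 2 n_j)) · (ψ_i* + ψ_i)` (the factors `1 − 2 n_j` pairwise
commute, so any fixed order may be used for the product; here the product is taken
in the order of the indices).  Then `u` is a self-adjoint unitary involution that
conjugates `ψ_i` to `ψ_i*` and fixes every `ψ_j` with `j ≠ i`. -/
theorem car_particle_hole_involution
    {R : Type*} [Ring R] [StarRing R] [Algebra ℂ R]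
    {N : ℕ} (ψ : Fin N → R)
    (hcar₁ : ∀ i j, ψ i * ψ j + ψ j * ψ i = 0)
    (hcar₂ : ∀ i j, ψ i * star (ψ j) + star (ψ j) * ψ i = if i = j then (1 : R) else 0)
    (i : Fin N) (u : R)
    (hu : u = (((List.finRange N).filter (fun j => j ≠ i)).map
        (fun j => (1 : R) - 2 * (star (ψ j) * ψ j))).prod * (star (ψ i) + ψ i)) :
    star u = u ∧ u * u = 1 ∧ star u * u = 1 ∧ u * star u = 1 ∧
      star u * ψ i * u = star (ψ i) ∧ ∀ j, j ≠ i → star u * ψ j * u = ψ j := by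
  have h : IsCAR ψ := ⟨hcar₁, hcar₂⟩
  have h2 : IsUnit (2 : R) :=
    map_ofNat (algebraMap ℂ R) 2 ▸ (IsUnit.mk0 (2 : ℂ) two_ne_zero).map (algebraMap ℂ R)
  set l := (List.finRange N).filter (fun j => j ≠ i)
  have hl (j : Fin N) : l.count j = if j = i then 0 else 1 := List.count_filter_ne_finRange i j
  have hu' : u = (l.map (parity ψ)).prod * majorana ψ i := hu
  set P := (l.map (parity ψ)).prod
  set γ := majorana ψ i
  have hPi : Commute (ψ i) P := by
    simpa [hl, commute_iff_eq] using h.mul_prod_parity l i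
  have hPγ : Commute P γ :=
    (((h.isSelfAdjoint_prod_parity l).star_eq ▸ hPi.star_star).add_left hPi).symm
  have hPj (j : Fin N) (hj : j ≠ i) : ψ j * P = -(P * ψ j) := by
    simpa [hl, hj] using h.mul_prod_parity l j
  have hu_sa : IsSelfAdjoint u :=
    hu' ▸ ((h.isSelfAdjoint_prod_parity l).commute_iff (isSelfAdjoint_majorana i)).1 hPγ
  have huu : u * u = 1 := by
    rw [hu', ← sq, hPγ.mul_pow, sq, sq, h.prod_parity_mul_self, h.majorana_mul_self h2, one_mul]
  refine ⟨hu_sa, huu, by rw [hu_sa.star_eq, huu], by rw [hu_sa.star_eq, huu], ?_, fun j hj => ?_⟩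
  · rw [hu_sa.star_eq, hu']
    calc P * γ * ψ i * (P * γ) = P * (γ * ψ i * P) * γ := by simp only [mul_assoc]
      _ = P * P * (γ * ψ i * γ) := by rw [← (hPγ.mul_right hPi.symm).eq]; simp only [mul_assoc]
      _ = star (ψ i) := by
        rw [h.prod_parity_mul_self, h.majorana_mul_mul_majorana_self h2, one_mul]
  · have hju : Commute (ψ j) u :=
      hu' ▸ commute_mul_of_anticommute (hPj j hj) (h.mul_majorana_of_ne hj)
    rw [hu_sa.star_eq, mul_assoc, hju.eq, ← mul_assoc, huu, one_mul]
end

section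
/- Let ψ : Fin N → M_m(ℂ) be a family of m×m complex matrices satisfying the canonical anticommutation relations (CAR), and let A be an N×N complex matrix. Define T := ∑_{j,k} A_{jk} · ψ_j* ψ_k. Then the unitary (when A is Hermitian) or invertible conjugation by exp(iT) implements the one-body transformation exp(iA): for every j, exp(−iT) · ψ_j · exp(iT) = ∑_{k} (exp(iA))_{jk} · ψ_k. -/
/-!
The CAR give `ψ i * T - T * ψ i = ∑ k, A i k • ψ k`. Put `a = I • T` and let `Ψ` be the matrix,
with entries in `M_m(ℂ)`, all of whose columns are `(ψ k)ₖ`. Then `Ψ * (a • 1) = (a • 1 + I • A) * Ψ`,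
and since `a • 1` commutes with the scalar matrix `I • A`, exponentiating gives
`Ψ * exp (a • 1) = exp (a • 1) * exp (I • A) * Ψ`. Its `(j, j)` entry is
`ψ j * exp a = exp a * ∑ k, exp (I • A) j k • ψ k`.
-/

open Matrix NormedSpace

section CAR

variable {ι R : Type*} [Ring R] [Star R]

structure IsCAR_s8 [DecidableEq ι] (ψ : ι → R) : Prop where
  anticomm : ∀ i j, ψ i * ψ j + ψ j * ψ i = 0
  anticomm_star : ∀ i j, ψ i * star (ψ j) + star (ψ j) * ψ i = if i = j then 1 else 0

def secondQuantization [Fintype ι] {𝕂 : Type*} [SMul 𝕂 R] (ψ : ι → R) (A : Matrix ι ι 𝕂) : R :=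
  ∑ p, ∑ q, A p q • (star (ψ p) * ψ q)

namespace IsCAR_s8

variable [DecidableEq ι] {ψ : ι → R}

theorem commutator_star_mul (hψ : IsCAR_s8 ψ) (i p q : ι) :
    ψ i * (star (ψ p) * ψ q) - star (ψ p) * ψ q * ψ i = if i = p then ψ q else 0 :=
  calc ψ i * (star (ψ p) * ψ q) - star (ψ p) * ψ q * ψ i
      = (ψ i * star (ψ p) + star (ψ p) * ψ i) * ψ q - star (ψ p) * (ψ q * ψ i + ψ i * ψ q) := by
        noncomm_ring
    _ = if i = p then ψ q else 0 := by
        rw [hψ.anticomm_star, hψ.anticomm]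
        split_ifs <;> simp

theorem commutator_secondQuantization [Fintype ι] {𝕂 : Type*} [CommSemiring 𝕂] [Algebra 𝕂 R]
    (hψ : IsCAR_s8 ψ) (A : Matrix ι ι 𝕂) (i : ι) :
    ψ i * secondQuantization ψ A - secondQuantization ψ A * ψ i = ∑ k, A i k • ψ k := by
  simp only [secondQuantization, Finset.mul_sum, Finset.sum_mul, mul_smul_comm, smul_mul_assoc,
    ← Finset.sum_sub_distrib, ← smul_sub, hψ.commutator_star_mul]
  simp

end IsCAR_s8

end CAR

namespace Matrix

variable {ι 𝕂 α β : Type*} [Fintype ι] [DecidableEq ι]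

section Normed

variable [NormedRing α] [NormedAlgebra ℚ α] [CompleteSpace α]

/- With the operator norm, `CompleteSpace (Matrix ι ι α)` is not found by instance search: the norm's
uniform structure agrees with the product one only up to unfolding instances. Hence the instance is
passed by hand in the next two proofs. -/

theorem exp_map_of_continuous [NormedRing β] [NormedAlgebra ℚ β] (f : α →+* β) (hf : Continuous f)
    (M : Matrix ι ι α) : exp (M.map f) = (exp M).map f := by
  have hcont : Continuous (f.mapMatrix : Matrix ι ι α →+* Matrix ι ι β) :=
    continuous_id.matrix_map hf
  have hcomplete : CompleteSpace (Matrix ι ι α) := inferInstance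
  open scoped Matrix.Norms.Operator in
  exact (@map_exp _ _ _ _ hcomplete _ _ _ _ _ f.mapMatrix hcont M).symm

theorem semiconjBy_exp_right {X A B : Matrix ι ι α} (h : SemiconjBy X A B) :
    SemiconjBy X (exp A) (exp B) := by
  have hcomplete : CompleteSpace (Matrix ι ι α) := inferInstance
  open scoped Matrix.Norms.Operator in
  exact @SemiconjBy.exp_right _ _ _ hcomplete _ _ _ h

theorem exp_scalar (a : α) : exp (scalar ι a) = scalar ι (exp a) := by
  simp only [scalar_apply, exp_diagonal, Pi.exp_def]

end Normed

variable [CommSemiring 𝕂] [Ring α] [Algebra 𝕂 α]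

theorem semiconjBy_replicateCol_scalar {v : ι → α} {a : α} {M : Matrix ι ι 𝕂}
    (hv : ∀ i, v i * a - a * v i = ∑ k, M i k • v k) :
    SemiconjBy (replicateCol ι v) (scalar ι a) (scalar ι a + M.map (algebraMap 𝕂 α)) := by
  refine Matrix.ext fun i l => ?_
  rw [add_mul, Matrix.add_apply, scalar_apply, mul_diagonal, diagonal_mul]
  simp only [replicateCol_apply, mul_apply, map_apply, ← Algebra.smul_def]
  rw [← hv i]
  abel

theorem commute_scalar_map_algebraMap (a : α) (M : Matrix ι ι 𝕂) :
    Commute (scalar ι a) (M.map (algebraMap 𝕂 α)) := by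
  ext i l
  simp [Algebra.commutes]

end Matrix

theorem exp_neg_mul_mul_exp_of_commutator_eq_sum {ι 𝕂 𝔸 : Type*} [Fintype ι] [DecidableEq ι]
    [NormedField 𝕂] [NormedAlgebra ℚ 𝕂] [CompleteSpace 𝕂]
    [NormedRing 𝔸] [NormedAlgebra ℚ 𝔸] [CompleteSpace 𝔸] [NormedAlgebra 𝕂 𝔸]
    {v : ι → 𝔸} {a : 𝔸} {M : Matrix ι ι 𝕂} (hv : ∀ i, v i * a - a * v i = ∑ k, M i k • v k)
    (j : ι) :
    exp (-a) * v j * exp a = ∑ k, exp M j k • v k := by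
  have h := semiconjBy_exp_right (semiconjBy_replicateCol_scalar hv)
  rw [Matrix.exp_add_of_commute _ _ (commute_scalar_map_algebraMap a M), exp_scalar,
    exp_map_of_continuous _ (algebraMapCLM 𝕂 𝔸).continuous] at h
  have hj : v j * exp a = exp a * ∑ k, exp M j k • v k := by
    have hjj := congrFun (congrFun h.eq j) j
    rw [mul_assoc, scalar_apply, mul_diagonal, diagonal_mul, replicateCol_apply, mul_apply] at hjj
    simpa only [replicateCol_apply, map_apply, ← Algebra.smul_def] using hjj
  calc exp (-a) * v j * exp a = exp (-a) * exp a * ∑ k, exp M j k • v k := by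
        rw [mul_assoc, hj, mul_assoc]
    _ = ∑ k, exp M j k • v k := by
        rw [← exp_add_of_commute (Commute.refl a).neg_left, neg_add_cancel, exp_zero, one_mul]

/-- Let `ψ : Fin N → M_m(ℂ)` satisfy the CAR and let `A` be an `N × N`
complex matrix.  With `T := ∑ⱼₖ Aⱼₖ • ψⱼ* ψₖ`, conjugation by `exp(iT)` implements the
one-body transformation `exp(iA)`:
`exp(−iT) ψⱼ exp(iT) = ∑ₖ (exp(iA))ⱼₖ • ψₖ` for every `j`. -/
theorem car_bogoliubov_rotation
    {N m : ℕ} (ψ : Fin N → Matrix (Fin m) (Fin m) ℂ)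
    (hcar₁ : ∀ i j, ψ i * ψ j + ψ j * ψ i = 0)
    (hcar₂ : ∀ i j, ψ i * star (ψ j) + star (ψ j) * ψ i
      = if i = j then (1 : Matrix (Fin m) (Fin m) ℂ) else 0)
    (A : Matrix (Fin N) (Fin N) ℂ)
    (T : Matrix (Fin m) (Fin m) ℂ)
    (hT : T = ∑ j, ∑ k, A j k • (star (ψ j) * ψ k))
    (j : Fin N) :
    NormedSpace.exp ((-Complex.I) • T) * ψ j * NormedSpace.exp (Complex.I • T)
      = ∑ k, (NormedSpace.exp (Complex.I • A)) j k • ψ k := by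
  have hT : T = secondQuantization ψ A := hT
  have hcomm : ∀ i, ψ i * (Complex.I • T) - (Complex.I • T) * ψ i
      = ∑ k, (Complex.I • A) i k • ψ k := fun i => by
    rw [mul_smul_comm, smul_mul_assoc, ← smul_sub, hT,
      (IsCAR_s8.mk hcar₁ hcar₂).commutator_secondQuantization, Finset.smul_sum]
    simp only [Matrix.smul_apply, smul_smul, smul_eq_mul]
  rw [neg_smul]
  open scoped Matrix.Norms.Operator in
  exact exp_neg_mul_mul_exp_of_commutator_eq_sum hcomm j
end

section
/- Let D be an n×n Hermitian complex matrix. Then exp(−D²) = (4π)^{−1/2} ∫_ℝ exp(−k²/4) · exp(i k D) dk, where the integral is the Bochner integral of the matrix-valued function k ↦ exp(−k²/4) exp(ikD) over ℝ. -/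
/-!
Diagonalize `D = U diag(λ) U*`. The map `v ↦ U diag(v) U*` is a continuous algebra homomorphism
`ℂⁿ → Mat n`, so it commutes with `exp` and with Bochner integrals; this reduces the identity to
its scalar case, the Fourier transform of a Gaussian:
`∫ exp(-k²/4) exp(ikz) dk = √(4π) exp(-z²)` for every `z : ℂ`.
-/

open Matrix MeasureTheory

attribute [local instance] Matrix.normedAddCommGroup Matrix.normedSpace

open Complex Real

theorem gaussian_smul_cexp_eq_cexp_quadratic (z : ℂ) (k : ℝ) :
    rexp (-(k ^ 2) / 4) • cexp (I * k * z) = cexp (-(1 / 4) * k ^ 2 + I * z * k + 0) := by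
  rw [Complex.real_smul, Complex.ofReal_exp, ← Complex.exp_add]
  push_cast
  ring_nf

theorem integrable_gaussian_smul_cexp (z : ℂ) :
    Integrable fun k : ℝ => rexp (-(k ^ 2) / 4) • cexp (I * k * z) := by
  simp_rw [gaussian_smul_cexp_eq_cexp_quadratic]
  exact integrable_cexp_quadratic (by norm_num) _ _

theorem integral_gaussian_smul_cexp (z : ℂ) :
    ∫ k : ℝ, rexp (-(k ^ 2) / 4) • cexp (I * k * z) = √(4 * π) • cexp (-(z * z)) := by
  simp_rw [gaussian_smul_cexp_eq_cexp_quadratic]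
  rw [integral_cexp_quadratic (by norm_num), Complex.real_smul]
  have hsqrt : ((π : ℂ) / -(-(1 / 4))) ^ (1 / 2 : ℂ) = (√(4 * π) : ℂ) := by
    rw [Real.sqrt_eq_rpow, Complex.ofReal_cpow (by positivity)]
    push_cast
    ring_nf
  rw [hsqrt]
  congr 2
  ring_nf
  rw [I_sq]
  ring

theorem Complex.exp_neg_mul_self_eq_gaussian_integral (z : ℂ) :
    cexp (-(z * z)) = (√(4 * π))⁻¹ • ∫ k : ℝ, rexp (-(k ^ 2) / 4) • cexp (I * k * z) := by
  rw [integral_gaussian_smul_cexp, inv_smul_smul₀ (by positivity)]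

section Pi

variable {ι : Type*} [Fintype ι]

theorem Pi.integrable_gaussian_smul_exp (x : ι → ℂ) :
    Integrable fun k : ℝ => rexp (-(k ^ 2) / 4) • NormedSpace.exp ((I * k) • x) :=
  Integrable.of_eval fun i => by
    simpa [← Complex.exp_eq_exp_ℂ, mul_assoc] using integrable_gaussian_smul_cexp (x i)

theorem Pi.exp_neg_mul_self_eq_gaussian_integral (x : ι → ℂ) :
    NormedSpace.exp (-(x * x))
      = (√(4 * π))⁻¹ • ∫ k : ℝ, rexp (-(k ^ 2) / 4) • NormedSpace.exp ((I * k) • x) := by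
  funext i
  rw [Pi.smul_apply, eval_integral (Pi.integrable_gaussian_smul_exp x).eval]
  simp [← Complex.exp_eq_exp_ℂ, Complex.exp_neg_mul_self_eq_gaussian_integral, mul_assoc]

variable {m : Type*} [Fintype m] [DecidableEq m]

/- `NormedSpace.map_exp` wants a normed ring structure on the target; the operator norm on
matrices provides one inducing the same topology, hence the same `exp`. -/
theorem AlgHom.map_exp_pi_matrix (φ : (ι → ℂ) →ₐ[ℂ] Matrix m m ℂ) (y : ι → ℂ) :
    φ (NormedSpace.exp y) = NormedSpace.exp (φ y) :=
  open scoped Norms.Operator in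
  NormedSpace.map_exp φ φ.toLinearMap.continuous_of_finiteDimensional y

theorem AlgHom.exp_neg_mul_self_eq_gaussian_integral (φ : (ι → ℂ) →ₐ[ℂ] Matrix m m ℂ)
    (x : ι → ℂ) :
    NormedSpace.exp (-(φ x * φ x))
      = (√(4 * π))⁻¹ • ∫ k : ℝ, rexp (-(k ^ 2) / 4) • NormedSpace.exp ((I * k) • φ x) := by
  let L : (ι → ℂ) →L[ℝ] Matrix m m ℂ :=
    LinearMap.toContinuousLinearMap (φ.toLinearMap.restrictScalars ℝ)
  have hintegrand (k : ℝ) : rexp (-(k ^ 2) / 4) • NormedSpace.exp ((I * k) • φ x)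
      = L (rexp (-(k ^ 2) / 4) • NormedSpace.exp ((I * k) • x)) := by
    rw [← map_smul φ, ← φ.map_exp_pi_matrix, L.map_smul]
    rfl
  calc NormedSpace.exp (-(φ x * φ x)) = L (NormedSpace.exp (-(x * x))) := by
        rw [← map_mul, ← map_neg, ← φ.map_exp_pi_matrix]
        rfl
    _ = (√(4 * π))⁻¹ • ∫ k : ℝ, L (rexp (-(k ^ 2) / 4) • NormedSpace.exp ((I * k) • x)) := by
        rw [Pi.exp_neg_mul_self_eq_gaussian_integral, L.map_smul]
        exact congrArg _ (L.integral_comp_comm (Pi.integrable_gaussian_smul_exp x)).symm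
    _ = _ := by simp_rw [hintegrand]

end Pi

/-- For an `n × n` Hermitian complex matrix `D`,
`exp(−D²) = (4π)^{−1/2} ∫_ℝ exp(−k²/4) exp(ikD) dk`,
the integral being the Bochner integral of the matrix-valued function
`k ↦ exp(−k²/4) exp(ikD)` over `ℝ`. -/
theorem exp_neg_sq_eq_gaussian_integral
    {n : ℕ} (D : Matrix (Fin n) (Fin n) ℂ) (hD : D.IsHermitian) :
    NormedSpace.exp (-(D * D))
      = (Real.sqrt (4 * Real.pi))⁻¹ •
          ∫ k : ℝ, Real.exp (-(k ^ 2) / 4) • NormedSpace.exp ((Complex.I * k) • D) := by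
  rw [hD.spectral_theorem]
  exact ((Unitary.conjStarAlgAut ℂ _ hD.eigenvectorUnitary).toAlgEquiv.toAlgHom.comp
    (diagonalAlgHom ℂ)).exp_neg_mul_self_eq_gaussian_integral _
end

section
/- Let D be an n×n Hermitian complex matrix. Then exp(D²) = (4π)^{−1/2} ∫_ℝ exp(−k²/4) · exp(k D) dk, where the integral is the Bochner integral of the matrix-valued function k ↦ exp(−k²/4) exp(kD) over ℝ. -/
/-!
Diagonalize `D = U Λ U*` by the spectral theorem. Conjugation by the unitary `U` is an algebra
automorphism of the finite-dimensional matrix algebra, so it commutes with `exp` and with the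
Bochner integral; this reduces the claim to the diagonal matrix `Λ`, i.e. to the scalar Gaussian
integral `∫ exp (-k²/4 + λk) dk = √(4π) exp (λ²)`, obtained by completing the square.
-/

open Matrix MeasureTheory

attribute [local instance] Matrix.normedAddCommGroup Matrix.normedSpace

theorem gaussian_smul_cexp_mul_eq_cexp_quadratic (k : ℝ) (c : ℂ) :
    Real.exp (-(k ^ 2) / 4) • Complex.exp (k * c)
      = Complex.exp (-(1 / 4) * (k : ℂ) ^ 2 + c * k + 0) := by
  rw [Complex.real_smul, Complex.ofReal_exp, ← Complex.exp_add]
  push_cast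
  ring_nf

theorem integrable_gaussian_smul_cexp_mul (c : ℂ) :
    Integrable fun k : ℝ => Real.exp (-(k ^ 2) / 4) • Complex.exp (k * c) := by
  simp_rw [gaussian_smul_cexp_mul_eq_cexp_quadratic]
  exact integrable_cexp_quadratic (by norm_num) c 0

theorem integral_gaussian_smul_cexp_mul (c : ℂ) :
    ∫ k : ℝ, Real.exp (-(k ^ 2) / 4) • Complex.exp (k * c)
      = Real.sqrt (4 * Real.pi) • Complex.exp (c ^ 2) := by
  simp_rw [gaussian_smul_cexp_mul_eq_cexp_quadratic]
  rw [integral_cexp_quadratic (by norm_num) c 0, Complex.real_smul]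
  congr 1
  · rw [show (Real.pi : ℂ) / -(-(1 / 4)) = ((4 * Real.pi : ℝ) : ℂ) by push_cast; ring,
      Real.sqrt_eq_rpow, Complex.ofReal_cpow (by positivity)]
    norm_num
  · congr 1
    ring

section Matrix

variable {m : Type*} [Fintype m] [DecidableEq m]

theorem exp_diagonal_mul_self_eq_gaussian_integral (v : m → ℂ) :
    NormedSpace.exp (diagonal v * diagonal v)
      = (Real.sqrt (4 * Real.pi))⁻¹ •
          ∫ k : ℝ, Real.exp (-(k ^ 2) / 4) • NormedSpace.exp ((k : ℂ) • diagonal v) := by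
  let Δ : (m → ℂ) →L[ℝ] Matrix m m ℂ := (diagonalLinearMap m ℝ ℂ).toContinuousLinearMap
  have hintegrand (k : ℝ) : Real.exp (-(k ^ 2) / 4) • NormedSpace.exp ((k : ℂ) • diagonal v)
      = Δ fun i => Real.exp (-(k ^ 2) / 4) • Complex.exp (k * v i) := by
    rw [← diagonal_smul, exp_diagonal, ← diagonal_smul]
    congr 1
    ext i
    simp [Pi.exp_def, Complex.exp_eq_exp_ℂ]
  have hintegrable (i : m) := integrable_gaussian_smul_cexp_mul (v i)
  have hentries : (∫ k : ℝ, fun i => Real.exp (-(k ^ 2) / 4) • Complex.exp (k * v i))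
      = fun i => Real.sqrt (4 * Real.pi) • Complex.exp (v i ^ 2) :=
    funext fun i => (eval_integral hintegrable i).trans (integral_gaussian_smul_cexp_mul (v i))
  have hsqrt : Real.sqrt (4 * Real.pi) ≠ 0 := by positivity
  simp_rw [hintegrand]
  erw [Δ.integral_comp_comm (Integrable.of_eval hintegrable), hentries]
  rw [diagonal_mul_diagonal, exp_diagonal]
  change _ = _ • diagonal _
  rw [← diagonal_smul]
  congr 1
  ext i
  rw [Pi.exp_def, Pi.smul_apply, smul_smul, inv_mul_cancel₀ hsqrt, one_smul, sq,
    Complex.exp_eq_exp_ℂ]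

-- The entrywise sup norm is not submultiplicative, so `NormedSpace.map_exp` is applied with the
-- operator norm; `exp` itself depends only on the topology.
theorem exp_map_algEquiv (φ : Matrix m m ℂ ≃ₐ[ℂ] Matrix m m ℂ) (A : Matrix m m ℂ) :
    NormedSpace.exp (φ A) = φ (NormedSpace.exp A) :=
  open scoped Norms.Operator in
  (NormedSpace.map_exp φ φ.toLinearMap.continuous_of_finiteDimensional A).symm

theorem integral_smul_exp_smul_map_algEquiv (φ : Matrix m m ℂ ≃ₐ[ℂ] Matrix m m ℂ)
    (f : ℝ → ℝ) (A : Matrix m m ℂ) :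
    ∫ k : ℝ, f k • NormedSpace.exp ((k : ℂ) • φ A)
      = φ (∫ k : ℝ, f k • NormedSpace.exp ((k : ℂ) • A)) := by
  let Φ : Matrix m m ℂ ≃L[ℝ] Matrix m m ℂ :=
    (φ.toLinearEquiv.restrictScalars ℝ).toContinuousLinearEquiv
  have hΦ (k : ℝ) :
      f k • NormedSpace.exp ((k : ℂ) • φ A) = Φ (f k • NormedSpace.exp ((k : ℂ) • A)) := by
    rw [← map_smul, exp_map_algEquiv, map_smul]
    rfl
  simp_rw [hΦ]
  exact Φ.integral_comp_comm _

end Matrix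

/-- For an `n × n` Hermitian complex matrix `D`,
`exp(D²) = (4π)^{−1/2} ∫_ℝ exp(−k²/4) exp(kD) dk`,
the integral being the Bochner integral of the matrix-valued function
`k ↦ exp(−k²/4) exp(kD)` over `ℝ`. -/
theorem exp_sq_eq_gaussian_integral
    {n : ℕ} (D : Matrix (Fin n) (Fin n) ℂ) (hD : D.IsHermitian) :
    NormedSpace.exp (D * D)
      = (Real.sqrt (4 * Real.pi))⁻¹ •
          ∫ k : ℝ, Real.exp (-(k ^ 2) / 4) • NormedSpace.exp ((k : ℂ) • D) := by
  let φ := (Unitary.conjStarAlgAut ℂ _ hD.eigenvectorUnitary).toAlgEquiv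
  have hspec : D = φ (diagonal (RCLike.ofReal ∘ hD.eigenvalues)) := hD.spectral_theorem
  rw [hspec, ← map_mul, exp_map_algEquiv, integral_smul_exp_smul_map_algEquiv,
    exp_diagonal_mul_self_eq_gaussian_integral]
  exact φ.toAlgHom.map_smul_of_tower _ _
end

section
/- Let H be an n×n Hermitian complex matrix, let E₀ be its smallest eigenvalue, let P₀ be the orthogonal projection onto the eigenspace of H for E₀, and let d := rank P₀. Then for every n×n complex matrix A, lim_{β → ∞} Tr(A · exp(−βH)) / Tr(exp(−βH)) = Tr(P₀ A) / d. In other words, the thermal (Gibbs) expectation of A converges, as the inverse temperature β tends to infinity, to the average of A over the ground-state eigenspace. -/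
open Matrix Filter

open scoped Topology

/-!
Diagonalise `H = U diag(λ) U*`. Then `Tr(A e^{-βH}) = ∑ᵢ (U*AU)ᵢᵢ e^{-βλᵢ}` and
`Tr e^{-βH} = ∑ᵢ e^{-βλᵢ}`; dividing both by `e^{-βE₀}`, each weight `e^{-β(λᵢ-E₀)}` tends to `1`
if `λᵢ = E₀` and to `0` otherwise. The hypotheses on `P₀` force `P₀ = U diag(1_{λᵢ = E₀}) U*`,
so the limits of numerator and denominator are `Tr(P₀A)` and `rank P₀`.
-/

theorem Matrix.trace_mul_mul_diagonal_mul {ι R : Type*} [Fintype ι] [DecidableEq ι] [CommSemiring R]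
    (A U V : Matrix ι ι R) (w : ι → R) :
    trace (A * (U * diagonal w * V)) = ∑ i, (V * A * U) i i * w i := by
  rw [← mul_assoc, ← mul_assoc, trace_mul_comm, ← mul_assoc, ← mul_assoc]
  simp [trace, mul_diagonal]

section Unitary

variable {ι R : Type*} [Fintype ι] [DecidableEq ι] [CommRing R] [StarRing R]
  {U : Matrix ι ι R} (hU : U ∈ unitary (Matrix ι ι R))
include hU

theorem Matrix.unitary_conj_diagonal_mul_unitary_conj_diagonal (v w : ι → R) :
    U * diagonal v * star U * (U * diagonal w * star U) = U * diagonal (v * w) * star U := by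
  simp only [mul_assoc, ← mul_assoc (star U) U, Unitary.star_mul_self_of_mem hU, one_mul,
    ← mul_assoc (diagonal v), diagonal_mul_diagonal, Pi.mul_def]

theorem Matrix.rank_unitary_conj (M : Matrix ι ι R) : (U * M * star U).rank = M.rank := by
  rw [rank_mul_eq_left_of_isUnit_det (star U) _
      (isUnit_det_of_left_inverse (Unitary.mul_star_self_of_mem hU)),
    rank_mul_eq_right_of_isUnit_det U _
      (isUnit_det_of_left_inverse (Unitary.star_mul_self_of_mem hU))]

end Unitary

theorem Matrix.exp_unitary_conj {ι 𝕜 : Type*} [Fintype ι] [DecidableEq ι] [RCLike 𝕜]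
    {U : Matrix ι ι 𝕜} (hU : U ∈ unitary (Matrix ι ι 𝕜)) (A : Matrix ι ι 𝕜) :
    NormedSpace.exp (U * A * star U) = U * NormedSpace.exp A * star U := by
  have hinv : U⁻¹ = star U := inv_eq_left_inv (Unitary.star_mul_self_of_mem hU)
  rw [← hinv, exp_conj U A (.of_mul_eq_one _ (Unitary.mul_star_self_of_mem hU))]

theorem Matrix.mul_eq_right_of_forall_mulVec_eq {ι R : Type*} [Fintype ι] [DecidableEq ι]
    [Semiring R] {H M N : Matrix ι ι R} {c : R}
    (hfix : ∀ v, H *ᵥ v = c • v → M *ᵥ v = v) (hN : H * N = c • N) : M * N = N := by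
  refine ext_of_mulVec_single fun j => ?_
  rw [← mulVec_mulVec]
  refine hfix _ ?_
  rw [mulVec_mulVec, hN, smul_mulVec]

theorem tendsto_cexp_neg_mul_atTop_nhds_zero {μ : ℝ} (hμ : 0 < μ) :
    Tendsto (fun β : ℝ => Complex.exp (-β * μ)) atTop (𝓝 0) := by
  rw [Complex.tendsto_exp_nhds_zero_iff]
  simpa using tendsto_id.atTop_mul_const hμ

theorem tendsto_sum_mul_cexp_div_sum_cexp {ι : Type*} [Fintype ι] {e : ι → ℝ} {e₀ : ℝ}
    (hmin : ∀ i, e₀ ≤ e i) (hmem : ∃ i, e i = e₀) (b : ι → ℂ) :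
    Tendsto (fun β : ℝ => (∑ i, b i * Complex.exp (-β * e i)) / ∑ i, Complex.exp (-β * e i))
      atTop (𝓝 ((∑ i with e i = e₀, b i) / Fintype.card {i // e i = e₀})) := by
  set w : ℝ → ι → ℂ := fun β i => Complex.exp (-β * (e i - e₀ : ℝ))
  have hw (i : ι) : Tendsto (w · i) atTop (𝓝 (if e i = e₀ then 1 else 0)) := by
    split_ifs with h
    · simp [w, h]
    · exact tendsto_cexp_neg_mul_atTop_nhds_zero (sub_pos.2 ((hmin i).lt_of_ne' h))
  have hnum : Tendsto (fun β => ∑ i, b i * w β i) atTop (𝓝 (∑ i with e i = e₀, b i)) := by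
    simpa [Finset.sum_filter] using tendsto_finsetSum _ fun i _ => (hw i).const_mul (b i)
  have hden : Tendsto (fun β => ∑ i, w β i) atTop (𝓝 (Fintype.card {i // e i = e₀} : ℂ)) := by
    simpa [Finset.sum_boole, Fintype.card_subtype] using tendsto_finsetSum _ fun i _ => hw i
  obtain ⟨i₀, hi₀⟩ := hmem
  have hcard : (Fintype.card {i // e i = e₀} : ℂ) ≠ 0 :=
    Nat.cast_ne_zero.2 (Fintype.card_pos_iff.2 ⟨⟨i₀, hi₀⟩⟩).ne'
  refine (hnum.div hden hcard).congr fun β => ?_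
  have hfac (i : ι) : Complex.exp (-β * e i) = w β i * Complex.exp (-β * e₀) := by
    rw [← Complex.exp_add]
    push_cast
    ring_nf
  simp only [Pi.div_apply, hfac, ← mul_assoc, ← Finset.sum_mul]
  rw [mul_div_mul_right _ _ (Complex.exp_ne_zero _)]

namespace Matrix.IsHermitian

variable {ι : Type*} [Fintype ι] [DecidableEq ι] {H : Matrix ι ι ℂ} (hH : H.IsHermitian)

theorem eq_unitary_conj_diagonal :
    H = (hH.eigenvectorUnitary : Matrix ι ι ℂ) * diagonal (fun i => (hH.eigenvalues i : ℂ)) *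
      star (hH.eigenvectorUnitary : Matrix ι ι ℂ) := by
  conv_lhs => rw [hH.spectral_theorem]
  rfl

theorem exp_smul_eq (z : ℂ) :
    NormedSpace.exp (z • H) = (hH.eigenvectorUnitary : Matrix ι ι ℂ) *
      diagonal (fun i => Complex.exp (z * hH.eigenvalues i)) *
        star (hH.eigenvectorUnitary : Matrix ι ι ℂ) := by
  conv_lhs => enter [1, 2]; rw [hH.eq_unitary_conj_diagonal]
  rw [← smul_mul_assoc, ← mul_smul_comm, ← diagonal_smul,
    exp_unitary_conj hH.eigenvectorUnitary.2, exp_diagonal]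
  simp only [Pi.exp_def, Pi.smul_apply, smul_eq_mul, ← Complex.exp_eq_exp_ℂ]

theorem trace_mul_exp_smul (z : ℂ) (A : Matrix ι ι ℂ) :
    trace (A * NormedSpace.exp (z • H)) = ∑ i,
      (star (hH.eigenvectorUnitary : Matrix ι ι ℂ) * A * hH.eigenvectorUnitary) i i *
        Complex.exp (z * hH.eigenvalues i) := by
  rw [exp_smul_eq, trace_mul_mul_diagonal_mul]

theorem trace_exp_smul (z : ℂ) :
    trace (NormedSpace.exp (z • H)) = ∑ i, Complex.exp (z * hH.eigenvalues i) := by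
  simpa [Unitary.star_mul_self_of_mem hH.eigenvectorUnitary.2] using hH.trace_mul_exp_smul z 1

noncomputable def eigenProj (E : ℝ) : Matrix ι ι ℂ :=
  (hH.eigenvectorUnitary : Matrix ι ι ℂ) *
    diagonal (fun i => if hH.eigenvalues i = E then 1 else 0) *
      star (hH.eigenvectorUnitary : Matrix ι ι ℂ)

theorem mul_eigenProj (E : ℝ) : H * hH.eigenProj E = (E : ℂ) • hH.eigenProj E := by
  conv_lhs => enter [1]; rw [hH.eq_unitary_conj_diagonal]
  rw [eigenProj, unitary_conj_diagonal_mul_unitary_conj_diagonal hH.eigenvectorUnitary.2,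
    ← smul_mul_assoc, ← mul_smul_comm, ← diagonal_smul]
  congr 3
  ext i
  simp only [Pi.mul_apply, Pi.smul_apply, smul_eq_mul]
  split_ifs with h <;> simp [h]

theorem eigenProj_mulVec_of_mulVec_eq {E : ℝ} {v : ι → ℂ} (hv : H *ᵥ v = (E : ℂ) • v) :
    hH.eigenProj E *ᵥ v = v := by
  set U := (hH.eigenvectorUnitary : Matrix ι ι ℂ)
  have hU := hH.eigenvectorUnitary.2
  have hD : star U * H * U = diagonal (fun i => (hH.eigenvalues i : ℂ)) := by
    simpa [Function.comp_def] using hH.conjStarAlgAut_star_eigenvectorUnitary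
  have hw : diagonal (fun i => (hH.eigenvalues i : ℂ)) *ᵥ (star U *ᵥ v) =
      (E : ℂ) • (star U *ᵥ v) := by
    rw [← hD, mulVec_mulVec, mul_assoc, Unitary.mul_star_self_of_mem hU, mul_one, ← mulVec_mulVec,
      hv, mulVec_smul]
  have hχ : diagonal (fun i => if hH.eigenvalues i = E then 1 else 0) *ᵥ (star U *ᵥ v) =
      star U *ᵥ v := by
    ext i
    have := congrFun hw i
    simp only [mulVec_diagonal, Pi.smul_apply, smul_eq_mul] at this ⊢
    split_ifs with h
    · exact one_mul _
    · rw [zero_mul, eq_comm]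
      by_contra hne
      exact h (Complex.ofReal_injective (mul_right_cancel₀ hne this))
  rw [eigenProj, ← mulVec_mulVec, ← mulVec_mulVec, hχ, mulVec_mulVec,
    Unitary.mul_star_self_of_mem hU, one_mulVec]

theorem isHermitian_eigenProj (E : ℝ) : (hH.eigenProj E).IsHermitian := by
  refine isHermitian_mul_mul_conjTranspose _ (isHermitian_diagonal_of_self_adjoint _ ?_)
  ext i
  simp [apply_ite]

theorem eq_eigenProj {E : ℝ} {P : Matrix ι ι ℂ} (hP : P.IsHermitian) (hHP : H * P = (E : ℂ) • P)
    (hfix : ∀ v, H *ᵥ v = (E : ℂ) • v → P *ᵥ v = v) : P = hH.eigenProj E := by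
  have hPQ := mul_eq_right_of_forall_mulVec_eq hfix (hH.mul_eigenProj E)
  have hQP := mul_eq_right_of_forall_mulVec_eq (fun _ hv => hH.eigenProj_mulVec_of_mulVec_eq hv) hHP
  calc P = (hH.eigenProj E * P)ᴴ := by rw [hQP, hP.eq]
    _ = P * hH.eigenProj E := by rw [conjTranspose_mul, hP.eq, (hH.isHermitian_eigenProj E).eq]
    _ = hH.eigenProj E := hPQ

theorem trace_eigenProj_mul (E : ℝ) (A : Matrix ι ι ℂ) :
    trace (hH.eigenProj E * A) = ∑ i with hH.eigenvalues i = E,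
      (star (hH.eigenvectorUnitary : Matrix ι ι ℂ) * A * hH.eigenvectorUnitary) i i := by
  rw [trace_mul_comm, eigenProj, trace_mul_mul_diagonal_mul, Finset.sum_filter]
  simp

theorem rank_eigenProj (E : ℝ) :
    (hH.eigenProj E).rank = Fintype.card {i // hH.eigenvalues i = E} := by
  rw [eigenProj, rank_unitary_conj hH.eigenvectorUnitary.2, rank_diagonal]
  simp

end Matrix.IsHermitian

theorem tendsto_gibbs_expectation_ground_state_general
    {n : ℕ} (H : Matrix (Fin n) (Fin n) ℂ) (hH : H.IsHermitian)
    (E₀ : ℝ)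
    (hmin : ∀ i, E₀ ≤ hH.eigenvalues i)
    (hmem : ∃ i, hH.eigenvalues i = E₀)
    (P₀ : Matrix (Fin n) (Fin n) ℂ)
    (hP₀herm : P₀.IsHermitian)
    (hP₀range : H * P₀ = (E₀ : ℂ) • P₀)
    (hP₀fix : ∀ v : Fin n → ℂ, H.mulVec v = (E₀ : ℂ) • v → P₀.mulVec v = v)
    (d : ℕ) (hd : d = P₀.rank)
    (A : Matrix (Fin n) (Fin n) ℂ) :
    Tendsto
      (fun β : ℝ =>
        Matrix.trace (A * NormedSpace.exp ((-β : ℂ) • H)) /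
          Matrix.trace (NormedSpace.exp ((-β : ℂ) • H)))
      atTop (nhds (Matrix.trace (P₀ * A) / (d : ℂ))) := by
  obtain rfl := hH.eq_eigenProj hP₀herm hP₀range hP₀fix
  rw [hd, hH.rank_eigenProj, hH.trace_eigenProj_mul]
  simp only [hH.trace_mul_exp_smul, hH.trace_exp_smul]
  exact tendsto_sum_mul_cexp_div_sum_cexp hmin hmem _

/-- Let `H` be an `n × n` Hermitian complex matrix with smallest
eigenvalue `E₀`, let `P₀` be the orthogonal projection onto the `E₀`-eigenspace
(characterized by: `P₀` is a Hermitian idempotent whose range consists of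
`E₀`-eigenvectors and which fixes every `E₀`-eigenvector), and let `d := rank P₀`.
Then for every `n × n` complex matrix `A`, as `β → ∞`,
`Tr(A e^{−βH}) / Tr(e^{−βH}) → Tr(P₀ A)/d`. -/
theorem tendsto_gibbs_expectation_ground_state
    {n : ℕ} (H : Matrix (Fin n) (Fin n) ℂ) (hH : H.IsHermitian)
    (E₀ : ℝ)
    (hmin : ∀ i, E₀ ≤ hH.eigenvalues i)
    (hmem : ∃ i, hH.eigenvalues i = E₀)
    (P₀ : Matrix (Fin n) (Fin n) ℂ)
    (hP₀herm : P₀.IsHermitian)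
    (hP₀idem : P₀ * P₀ = P₀)
    (hP₀range : H * P₀ = (E₀ : ℂ) • P₀)
    (hP₀fix : ∀ v : Fin n → ℂ, H.mulVec v = (E₀ : ℂ) • v → P₀.mulVec v = v)
    (d : ℕ) (hd : d = P₀.rank)
    (A : Matrix (Fin n) (Fin n) ℂ) :
    Tendsto
      (fun β : ℝ =>
        Matrix.trace (A * NormedSpace.exp ((-β : ℂ) • H)) /
          Matrix.trace (NormedSpace.exp ((-β : ℂ) • H)))
      atTop (nhds (Matrix.trace (P₀ * A) / (d : ℂ))) :=
  tendsto_gibbs_expectation_ground_state_general H hH E₀ hmin hmem P₀ hP₀herm hP₀range hP₀fix d hd A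
end

section
/- Let H be an n×n Hermitian complex matrix, let β ≥ 0, and let B be any n×n complex matrix. Then the thermal expectation of the double commutator, Tr( exp(−βH) · [B, [H, B*]] ), is a nonnegative real number, where B* is the conjugate transpose of B and [X, Y] := XY − YX. -/
/-!
Conjugating by the eigenvector unitary of `H` makes both `H` and `exp (-β H) = cfc f H` diagonal,
with `f x = exp (-β x)`, and leaves the trace unchanged. For diagonal `H = diag E`,
`ρ = diag r` and `C = U* B U`, the trace is `∑_{m,k} (r m - r k) (E k - E m) ‖C m k‖²`, and every
term is nonnegative because `r` decreases as `E` increases.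
-/

open Matrix Unitary
open scoped ComplexOrder ComplexConjugate

variable {ι 𝕜 : Type*} [Fintype ι] [DecidableEq ι] [RCLike 𝕜]

namespace Matrix

theorem lie_diagonal_conjTranspose_apply (E : ι → ℝ) (C : Matrix ι ι 𝕜) (a b : ι) :
    ⁅diagonal ((RCLike.ofReal : ℝ → 𝕜) ∘ E), Cᴴ⁆ a b = ((E a - E b : ℝ) : 𝕜) * conj (C b a) := by
  simp only [Ring.lie_def, sub_apply, diagonal_mul, mul_diagonal, conjTranspose_apply,
    Function.comp_apply, RCLike.ofReal_sub, RCLike.star_def]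
  ring

theorem diag_mul_lie_diagonal_conjTranspose (E : ι → ℝ) (C : Matrix ι ι 𝕜) (m : ι) :
    (C * ⁅diagonal ((RCLike.ofReal : ℝ → 𝕜) ∘ E), Cᴴ⁆) m m =
      ∑ k, (((E k - E m) * ‖C m k‖ ^ 2 : ℝ) : 𝕜) := by
  rw [mul_apply]
  refine Finset.sum_congr rfl fun k _ => ?_
  rw [lie_diagonal_conjTranspose_apply, RCLike.ofReal_mul, RCLike.ofReal_pow, ← RCLike.mul_conj]
  ring

theorem diag_lie_diagonal_conjTranspose_mul (E : ι → ℝ) (C : Matrix ι ι 𝕜) (m : ι) :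
    (⁅diagonal ((RCLike.ofReal : ℝ → 𝕜) ∘ E), Cᴴ⁆ * C) m m =
      ∑ k, (((E m - E k) * ‖C k m‖ ^ 2 : ℝ) : 𝕜) := by
  rw [mul_apply]
  refine Finset.sum_congr rfl fun k _ => ?_
  rw [lie_diagonal_conjTranspose_apply, RCLike.ofReal_mul, RCLike.ofReal_pow, ← RCLike.mul_conj]
  ring

theorem trace_diagonal_mul_lie_lie_diagonal (r E : ι → ℝ) (C : Matrix ι ι 𝕜) :
    trace (diagonal ((RCLike.ofReal : ℝ → 𝕜) ∘ r) *
        ⁅C, ⁅diagonal ((RCLike.ofReal : ℝ → 𝕜) ∘ E), Cᴴ⁆⁆) =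
      ∑ m, ∑ k, (((r m - r k) * (E k - E m) * ‖C m k‖ ^ 2 : ℝ) : 𝕜) := by
  simp only [trace, diag_apply, diagonal_mul, Ring.lie_def C, sub_apply,
    diag_mul_lie_diagonal_conjTranspose, diag_lie_diagonal_conjTranspose_mul, mul_sub,
    Finset.mul_sum, Finset.sum_sub_distrib, Function.comp_apply]
  -- relabel `m ↔ k` in the second double sum
  rw [Finset.sum_comm (f := fun m k => (r m : 𝕜) * (((E m - E k) * ‖C k m‖ ^ 2 : ℝ) : 𝕜)),
    ← Finset.sum_sub_distrib]
  refine Finset.sum_congr rfl fun m _ => ?_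
  rw [← Finset.sum_sub_distrib]
  refine Finset.sum_congr rfl fun k _ => ?_
  push_cast
  ring

theorem trace_diagonal_mul_lie_lie_diagonal_nonneg {r E : ι → ℝ} (hrE : Antivary r E)
    (C : Matrix ι ι 𝕜) :
    0 ≤ trace (diagonal ((RCLike.ofReal : ℝ → 𝕜) ∘ r) *
      ⁅C, ⁅diagonal ((RCLike.ofReal : ℝ → 𝕜) ∘ E), Cᴴ⁆⁆) := by
  rw [trace_diagonal_mul_lie_lie_diagonal]
  simp only [← RCLike.ofReal_sum, RCLike.ofReal_nonneg]
  refine Finset.sum_nonneg fun m _ => Finset.sum_nonneg fun k _ => mul_nonneg ?_ (by positivity)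
  rw [← neg_sub (r k), neg_mul]
  exact neg_nonneg.2 (hrE.sub_mul_sub_nonpos m k)

theorem trace_conjStarAlgAut (U : unitary (Matrix ι ι 𝕜)) (X : Matrix ι ι 𝕜) :
    trace (conjStarAlgAut 𝕜 _ U X) = trace X := by
  rw [conjStarAlgAut_apply, trace_mul_cycle, coe_star_mul_self, one_mul]

theorem IsHermitian.trace_cfc_mul_lie_lie_conjTranspose_nonneg {H : Matrix ι ι 𝕜}
    (hH : H.IsHermitian) {f : ℝ → ℝ} (hf : Antitone f) (B : Matrix ι ι 𝕜) :
    0 ≤ trace (cfc f H * ⁅B, ⁅H, Bᴴ⁆⁆) := by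
  set φ := conjStarAlgAut 𝕜 _ hH.eigenvectorUnitary with hφ
  obtain ⟨C, rfl⟩ : ∃ C, φ C = B := φ.surjective B
  have hconj : cfc f H * ⁅φ C, ⁅H, (φ C)ᴴ⁆⁆ =
      φ (diagonal (RCLike.ofReal ∘ f ∘ hH.eigenvalues) *
        ⁅C, ⁅diagonal ((RCLike.ofReal : ℝ → 𝕜) ∘ hH.eigenvalues), Cᴴ⁆⁆) := by
    simp only [hH.cfc_eq, IsHermitian.cfc, Ring.lie_def, ← star_eq_conjTranspose, map_mul,
      map_sub, map_star, hφ, ← hH.spectral_theorem]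
  rw [hconj, trace_conjStarAlgAut]
  exact trace_diagonal_mul_lie_lie_diagonal_nonneg
    ((hf.antivary monotone_id).comp_right hH.eigenvalues) C

open scoped Matrix.Norms.L2Operator in
theorem IsHermitian.exp_smul_eq_cfc {H : Matrix ι ι 𝕜} (hH : H.IsHermitian) (t : ℝ) :
    NormedSpace.exp (t • H) = cfc (fun x => Real.exp (t * x)) H := by
  -- any norm inducing the product topology will do; this one must be built on the existing
  -- `ℝ`-algebra structure, which `NormedAlgebra.restrictScalars` would not reuse
  let _ : NormedAlgebra ℝ (Matrix ι ι 𝕜) :=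
    { norm_smul_le r x := by
        rw [RCLike.real_smul_eq_coe_smul (K := 𝕜), norm_smul, RCLike.norm_ofReal,
          Real.norm_eq_abs] }
  rw [← CFC.real_exp_eq_normedSpace_exp ((IsSelfAdjoint.all t).smul hH.isSelfAdjoint),
    ← cfc_comp_smul t _ H]
  rfl

end Matrix

/-- For an `n × n` Hermitian complex matrix `H`, `β ≥ 0` and any
`n × n` complex matrix `B`, the thermal expectation of the double commutator
`Tr( e^{−βH} [B, [H, B*]] )` is a nonnegative real number. -/
theorem trace_exp_double_commutator_nonneg
    {n : ℕ} (H : Matrix (Fin n) (Fin n) ℂ) (hH : H.IsHermitian)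
    (β : ℝ) (hβ : 0 ≤ β)
    (B : Matrix (Fin n) (Fin n) ℂ) :
    (Matrix.trace (NormedSpace.exp ((-β : ℂ) • H) *
        (B * (H * Bᴴ - Bᴴ * H) - (H * Bᴴ - Bᴴ * H) * B))).im = 0 ∧
      0 ≤ (Matrix.trace (NormedSpace.exp ((-β : ℂ) • H) *
        (B * (H * Bᴴ - Bᴴ * H) - (H * Bᴴ - Bᴴ * H) * B))).re := by
  have hρ : NormedSpace.exp ((-β : ℂ) • H) = cfc (fun x => Real.exp (-β * x)) H := by
    rw [← hH.exp_smul_eq_cfc, ← Complex.coe_smul, Complex.ofReal_neg]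
  have hanti : Antitone fun x => Real.exp (-β * x) := fun x y hxy =>
    Real.exp_le_exp.2 (by nlinarith)
  have h := hH.trace_cfc_mul_lie_lie_conjTranspose_nonneg hanti B
  rw [Ring.lie_def, Ring.lie_def, ← hρ, Complex.nonneg_iff] at h
  exact ⟨h.2.symm, h.1⟩
end

section
/- Let H be an n×n Hermitian complex matrix and β > 0, and for n×n complex matrices A, B define the Duhamel two-point function (A, B)_{β,H} := (Tr e^{−βH})^{−1} ∫₀¹ Tr( e^{−sβH} A e^{−(1−s)βH} B ) ds. Then: (i) (A, B)_{β,H} = (B, A)_{β,H} for all A, B; (ii) (A*, A)_{β,H} is a nonnegative real number for every A; and (iii) if A = A₁ + iA₂ with A₁ and A₂ Hermitian, then (A*, A)_{β,H} = (A₁, A₁)_{β,H} + (A₂, A₂)_{β,H}. -/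
/-!
Symmetry is the substitution `s ↦ 1 - s` combined with cyclicity of the trace, and the
decomposition follows from bilinearity and symmetry, which make the cross terms
`i (A₁, A₂) - i (A₂, A₁)` cancel. Positivity holds pointwise in `s`: the factors
`P = e^{-sβH}` and `Q = e^{-(1-s)βH}` are positive semidefinite, and writing `P = C* C` gives
`Tr (P A* Q A) = Tr ((A C*)* Q (A C*)) ≥ 0`; the partition function `Tr e^{-βH}` is
nonnegative for the same reason.
-/

open Matrix MeasureTheory

/-- The Duhamel two-point function
`(A, B)_{β,H} := (Tr e^{−βH})⁻¹ ∫₀¹ Tr( e^{−sβH} A e^{−(1−s)βH} B ) ds`. -/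
noncomputable def duhamel {n : ℕ} (H : Matrix (Fin n) (Fin n) ℂ) (β : ℝ)
    (A B : Matrix (Fin n) (Fin n) ℂ) : ℂ :=
  (Matrix.trace (NormedSpace.exp ((-β : ℂ) • H)))⁻¹ *
    ∫ s in (0:ℝ)..1,
      Matrix.trace (NormedSpace.exp (((-(s * β) : ℝ) : ℂ) • H) * A *
        NormedSpace.exp (((-((1 - s) * β) : ℝ) : ℂ) • H) * B)

open scoped ComplexOrder

namespace Matrix

variable {m : Type*} [Fintype m] [DecidableEq m]

theorem continuous_exp_smul (H : Matrix m m ℂ) :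
    Continuous fun t : ℂ => NormedSpace.exp (t • H) := by
  let := Matrix.linftyOpNormedRing (n := m) (α := ℂ)
  let := Matrix.linftyOpNormedAlgebra (n := m) (R := ℂ) (α := ℂ)
  exact (differentiable_exp_smul_const ℂ H).continuous

theorem IsHermitian.posSemidef_exp {H : Matrix m m ℂ} (hH : H.IsHermitian) :
    (NormedSpace.exp H).PosSemidef := by
  have hhalf : (NormedSpace.exp ((1 / 2 : ℂ) • H)).IsHermitian :=
    (hH.smul (by simp [IsSelfAdjoint])).exp
  have hsplit : NormedSpace.exp H =
      (NormedSpace.exp ((1 / 2 : ℂ) • H))ᴴ * NormedSpace.exp ((1 / 2 : ℂ) • H) := by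
    rw [hhalf.eq, ← exp_add_of_commute _ _ (Commute.refl _), ← add_smul]
    norm_num
  rw [hsplit]
  exact posSemidef_conjTranspose_mul_self _

theorem IsHermitian.posSemidef_exp_ofReal_smul {H : Matrix m m ℂ} (hH : H.IsHermitian)
    (t : ℝ) : (NormedSpace.exp ((t : ℂ) • H)).PosSemidef :=
  (hH.smul (by simp [IsSelfAdjoint])).posSemidef_exp

open scoped MatrixOrder in
theorem PosSemidef.trace_mul_conjTranspose_mul_nonneg {P Q : Matrix m m ℂ} (hP : P.PosSemidef)
    (hQ : Q.PosSemidef) (A : Matrix m m ℂ) : 0 ≤ (P * Aᴴ * Q * A).trace := by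
  obtain ⟨C, rfl⟩ := CStarAlgebra.nonneg_iff_eq_star_mul_self.mp hP.nonneg
  calc (0 : ℂ) ≤ ((A * Cᴴ)ᴴ * Q * (A * Cᴴ)).trace :=
        (hQ.conjTranspose_mul_mul_same _).trace_nonneg
    _ = (C * Aᴴ * Q * A * Cᴴ).trace := by
        simp only [conjTranspose_mul, conjTranspose_conjTranspose, Matrix.mul_assoc]
    _ = (Cᴴ * (C * Aᴴ * Q * A)).trace := trace_mul_comm _ _
    _ = (star C * C * Aᴴ * Q * A).trace := by simp only [star_eq_conjTranspose, Matrix.mul_assoc]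

end Matrix

section Duhamel

variable {n : ℕ} (H : Matrix (Fin n) (Fin n) ℂ) (β : ℝ)

noncomputable def duhamelIntegrand (A B : Matrix (Fin n) (Fin n) ℂ) (s : ℝ) : ℂ :=
  trace (NormedSpace.exp (((-(s * β) : ℝ) : ℂ) • H) * A *
    NormedSpace.exp (((-((1 - s) * β) : ℝ) : ℂ) • H) * B)

theorem duhamel_eq_integral (A B : Matrix (Fin n) (Fin n) ℂ) :
    duhamel H β A B = (trace (NormedSpace.exp ((-β : ℂ) • H)))⁻¹ *
      ∫ s in (0 : ℝ)..1, duhamelIntegrand H β A B s :=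
  rfl

theorem continuous_duhamelIntegrand (A B : Matrix (Fin n) (Fin n) ℂ) :
    Continuous (duhamelIntegrand H β A B) := by
  have hexp {f : ℝ → ℝ} (hf : Continuous f) :
      Continuous fun s => NormedSpace.exp (((f s : ℝ) : ℂ) • H) :=
    (continuous_exp_smul H).comp (Complex.continuous_ofReal.comp hf)
  exact ((((hexp (by fun_prop)).matrix_mul continuous_const).matrix_mul
    (hexp (by fun_prop))).matrix_mul continuous_const).matrix_trace

theorem duhamelIntegrand_one_sub (A B : Matrix (Fin n) (Fin n) ℂ) (s : ℝ) :
    duhamelIntegrand H β A B (1 - s) = duhamelIntegrand H β B A s := by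
  simp only [duhamelIntegrand, sub_sub_cancel]
  rw [Matrix.mul_assoc (_ * A), trace_mul_comm, ← Matrix.mul_assoc]

theorem duhamel_comm (A B : Matrix (Fin n) (Fin n) ℂ) :
    duhamel H β A B = duhamel H β B A := by
  have hreflect := intervalIntegral.integral_comp_sub_left (duhamelIntegrand H β A B) (1 : ℝ)
    (a := 0) (b := 1)
  simp only [sub_self, sub_zero, duhamelIntegrand_one_sub] at hreflect
  rw [duhamel_eq_integral, duhamel_eq_integral, ← hreflect]

theorem duhamel_add_left (A₁ A₂ B : Matrix (Fin n) (Fin n) ℂ) :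
    duhamel H β (A₁ + A₂) B = duhamel H β A₁ B + duhamel H β A₂ B := by
  have hsplit (s : ℝ) : duhamelIntegrand H β (A₁ + A₂) B s =
      duhamelIntegrand H β A₁ B s + duhamelIntegrand H β A₂ B s := by
    simp only [duhamelIntegrand, Matrix.mul_add, Matrix.add_mul, trace_add]
  simp only [duhamel_eq_integral, hsplit, ← mul_add]
  rw [intervalIntegral.integral_add
    ((continuous_duhamelIntegrand H β _ _).intervalIntegrable _ _)
    ((continuous_duhamelIntegrand H β _ _).intervalIntegrable _ _)]

theorem duhamel_smul_left (c : ℂ) (A B : Matrix (Fin n) (Fin n) ℂ) :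
    duhamel H β (c • A) B = c * duhamel H β A B := by
  have hsplit (s : ℝ) :
      duhamelIntegrand H β (c • A) B s = c * duhamelIntegrand H β A B s := by
    simp only [duhamelIntegrand, Matrix.mul_smul, Matrix.smul_mul, trace_smul, smul_eq_mul]
  simp only [duhamel_eq_integral, hsplit, intervalIntegral.integral_const_mul]
  ring

theorem duhamel_add_right (A B₁ B₂ : Matrix (Fin n) (Fin n) ℂ) :
    duhamel H β A (B₁ + B₂) = duhamel H β A B₁ + duhamel H β A B₂ := by
  simp only [duhamel_comm H β A, duhamel_add_left]

theorem duhamel_smul_right (c : ℂ) (A B : Matrix (Fin n) (Fin n) ℂ) :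
    duhamel H β A (c • B) = c * duhamel H β A B := by
  simp only [duhamel_comm H β A, duhamel_smul_left]

variable {H}

theorem Matrix.IsHermitian.duhamel_conjTranspose_self_nonneg (hH : H.IsHermitian)
    (A : Matrix (Fin n) (Fin n) ℂ) : 0 ≤ duhamel H β Aᴴ A := by
  have hZ : 0 ≤ trace (NormedSpace.exp ((-β : ℂ) • H)) := by
    simpa using (hH.posSemidef_exp_ofReal_smul (-β)).trace_nonneg
  have hintegrand (s : ℝ) : 0 ≤ duhamelIntegrand H β Aᴴ A s :=
    (hH.posSemidef_exp_ofReal_smul _).trace_mul_conjTranspose_mul_nonneg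
      (hH.posSemidef_exp_ofReal_smul _) A
  rw [duhamel_eq_integral, intervalIntegral.integral_of_le zero_le_one]
  exact mul_nonneg (inv_nonneg.mpr hZ) (integral_nonneg hintegrand)

theorem duhamel_conjTranspose_add_I_smul {A₁ A₂ : Matrix (Fin n) (Fin n) ℂ}
    (h₁ : A₁.IsHermitian) (h₂ : A₂.IsHermitian) :
    duhamel H β (A₁ + Complex.I • A₂)ᴴ (A₁ + Complex.I • A₂) =
      duhamel H β A₁ A₁ + duhamel H β A₂ A₂ := by
  have hstar : (A₁ + Complex.I • A₂)ᴴ = A₁ + (-Complex.I) • A₂ := by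
    rw [conjTranspose_add, conjTranspose_smul, h₁.eq, h₂.eq, Complex.star_def, Complex.conj_I]
  rw [hstar, duhamel_add_left, duhamel_add_right, duhamel_add_right, duhamel_smul_left,
    duhamel_smul_left, duhamel_smul_right, duhamel_smul_right, duhamel_comm H β A₂ A₁]
  linear_combination (-duhamel H β A₂ A₂) * Complex.I_mul_I

end Duhamel

theorem duhamel_symm_nonneg_decomp_general
    {n : ℕ} (H : Matrix (Fin n) (Fin n) ℂ) (hH : H.IsHermitian)
    (β : ℝ) :
    (∀ A B : Matrix (Fin n) (Fin n) ℂ, duhamel H β A B = duhamel H β B A) ∧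
      (∀ A : Matrix (Fin n) (Fin n) ℂ,
        (duhamel H β Aᴴ A).im = 0 ∧ 0 ≤ (duhamel H β Aᴴ A).re) ∧
      (∀ A A₁ A₂ : Matrix (Fin n) (Fin n) ℂ,
        A₁.IsHermitian → A₂.IsHermitian → A = A₁ + Complex.I • A₂ →
          duhamel H β Aᴴ A = duhamel H β A₁ A₁ + duhamel H β A₂ A₂) := by
  refine ⟨duhamel_comm H β, fun A => ?_, ?_⟩
  · obtain ⟨hre, him⟩ := Complex.nonneg_iff.mp (hH.duhamel_conjTranspose_self_nonneg β A)
    exact ⟨him.symm, hre⟩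
  · rintro A A₁ A₂ h₁ h₂ rfl
    exact duhamel_conjTranspose_add_I_smul β h₁ h₂

/-- For an `n × n` Hermitian complex matrix `H` and `β > 0`, the
Duhamel two-point function satisfies: (i) it is symmetric, `(A, B) = (B, A)`;
(ii) `(A*, A)` is a nonnegative real number; (iii) if `A = A₁ + iA₂` with `A₁, A₂`
Hermitian, then `(A*, A) = (A₁, A₁) + (A₂, A₂)`. -/
theorem duhamel_symm_nonneg_decomp
    {n : ℕ} (H : Matrix (Fin n) (Fin n) ℂ) (hH : H.IsHermitian)
    (β : ℝ) (hβ : 0 < β) :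
    (∀ A B : Matrix (Fin n) (Fin n) ℂ, duhamel H β A B = duhamel H β B A) ∧
      (∀ A : Matrix (Fin n) (Fin n) ℂ,
        (duhamel H β Aᴴ A).im = 0 ∧ 0 ≤ (duhamel H β Aᴴ A).re) ∧
      (∀ A A₁ A₂ : Matrix (Fin n) (Fin n) ℂ,
        A₁.IsHermitian → A₂.IsHermitian → A = A₁ + Complex.I • A₂ →
          duhamel H β Aᴴ A = duhamel H β A₁ A₁ + duhamel H β A₂ A₂) :=
  duhamel_symm_nonneg_decomp_general H hH β
end

section
/- Let H be an n×n positive semidefinite Hermitian complex matrix, let E > 0 be a real number, and let 0 < ε ≤ 2. Then the Loewner operator inequality H^{1+ε} ≼ E^{ε} · H + E^{ε−2} · H³ holds; that is, the matrix E^{ε} H + E^{ε−2} H³ − H^{1+ε} is positive semidefinite. -/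
/-!
For `s ≤ E` the linear term alone dominates, `s ^ (1 + ε) = s ^ ε * s ≤ E ^ ε * s`, and for
`s ≥ E` the cubic term does, `s ^ (1 + ε) = s ^ (ε - 2) * s ^ 3 ≤ E ^ (ε - 2) * s ^ 3`, since
`ε - 2 ≤ 0`. This scalar inequality on the (nonnegative) spectrum of `H` lifts to the Loewner
order by monotonicity of the continuous functional calculus.
-/

open Matrix
open scoped ComplexOrder

theorem Real.rpow_one_add_le_mul_add_mul_pow_three {E ε s : ℝ} (hE : 0 < E) (hε₀ : 0 ≤ ε)
    (hε₂ : ε ≤ 2) (hs : 0 ≤ s) : s ^ (1 + ε) ≤ E ^ ε * s + E ^ (ε - 2) * s ^ 3 := by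
  rcases le_or_gt s E with hsE | hEs
  · calc s ^ (1 + ε) = s ^ ε * s := by
          rw [Real.rpow_add' hs (by positivity), Real.rpow_one, mul_comm]
      _ ≤ E ^ ε * s := by gcongr
      _ ≤ _ := le_add_of_nonneg_right (by positivity)
  · have hs₀ : 0 < s := hE.trans hEs
    calc s ^ (1 + ε) = s ^ (ε - 2) * s ^ 3 := by
          rw [← Real.rpow_natCast, ← Real.rpow_add hs₀]
          ring_nf
      _ ≤ E ^ (ε - 2) * s ^ 3 := by
          gcongr ?_ * _
          exact Real.rpow_le_rpow_of_nonpos hE hEs.le (by linarith)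
      _ ≤ _ := le_add_of_nonneg_left (by positivity)

open scoped MatrixOrder

/-- Let `H` be an `n × n` positive semidefinite Hermitian complex
matrix, `E > 0` and `0 < ε ≤ 2`.  Then `H^{1+ε} ≼ E^ε H + E^{ε−2} H³` in the Loewner
order; here `H^{1+ε}` is defined by applying `s ↦ s^{1+ε}` to `H` via the continuous
functional calculus of the Hermitian matrix `H`. -/
theorem matrix_rpow_loewner_bound
    {n : ℕ} (H : Matrix (Fin n) (Fin n) ℂ) (hH : H.PosSemidef)
    (E : ℝ) (hE : 0 < E) (ε : ℝ) (hε : 0 < ε) (hε' : ε ≤ 2) :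
    ((E ^ ε) • H + (E ^ (ε - 2)) • (H * H * H)
      - hH.isHermitian.cfc (fun s : ℝ => s ^ (1 + ε))).PosSemidef := by
  have hcubic : cfc (fun s => E ^ ε * s + E ^ (ε - 2) * s ^ 3) H =
      (E ^ ε) • H + (E ^ (ε - 2)) • (H * H * H) := by
    rw [cfc_add .., cfc_const_mul .., cfc_const_mul .., cfc_id' .., cfc_pow_id .., pow_three,
      mul_assoc]
  have hle : cfc (fun s : ℝ => s ^ (1 + ε)) H ≤
      cfc (fun s => E ^ ε * s + E ^ (ε - 2) * s ^ 3) H :=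
    cfc_mono (fun s hs => Real.rpow_one_add_le_mul_add_mul_pow_three hE hε.le hε'
        (spectrum_nonneg_of_nonneg hH.nonneg hs))
      (Real.continuous_rpow_const (by linarith : (0 : ℝ) ≤ 1 + ε)).continuousOn
  rwa [hcubic, hH.isHermitian.cfc_eq] at hle
end
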